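/- Assume conditions (A2)–(A4). Then the sequence R_n(g) := (χ_g(Φ_0) − χ_g(Φ_n))/√(2 n ln ln n), defined for integers n ≥ 3, converges to zero ℙ_μ-almost surely as n → ∞. -/

import Mathlib

open MeasureTheory Filter Set
open scoped ENNReal Topology NNReal

noncomputable section

variable {X : Type*} [MetricSpace X] [CompleteSpace X] [SecondCountableTopology X]
  [MeasurableSpace X] [BorelSpace X]

/-- Action of a transition kernel family on measures: `ν ↦ ν P_t`. -/
def measAct (P : ℝ → X → Measure X) (t : ℝ) (ν : Measure X) : Measure X :=
  ν.bind (P t)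

/-- Dual action of the semigroup on functions: `f ↦ P_t f`. -/
def funAct (P : ℝ → X → Measure X) (t : ℝ) (f : X → ℝ) (x : X) : ℝ :=
  ∫ y, f y ∂(P t x)

/-- A Borel (probability) measure has a finite first moment. -/
def FiniteFirstMoment (ν : Measure X) : Prop :=
  ∀ x₀ : X, Integrable (fun x => dist x₀ x) ν

/-- The Wasserstein (Kantorovich–Rubinstein) distance `d_W`. -/
def wassDist (μ ν : Measure X) : ℝ :=
  sSup {r | ∃ f : X → ℝ, LipschitzWith 1 f ∧ r = |(∫ x, f x ∂μ) - ∫ x, f x ∂ν|}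

/-- A Markov semigroup `{P_t}_{t ≥ 0}` of probability kernels on `X`. -/
structure IsMarkovSemigroup (P : ℝ → X → Measure X) : Prop where
  prob : ∀ t, 0 ≤ t → ∀ x, IsProbabilityMeasure (P t x)
  jointMeas : ∀ A : Set X, MeasurableSet A → Measurable fun p : ℝ × X => P p.1 p.2 A
  init : ∀ x, P 0 x = Measure.dirac x
  chapman : ∀ s t, 0 ≤ s → 0 ≤ t → ∀ x, P (s + t) x = (P s x).bind (P t)

/-- Condition (A1): stochastic continuity of the semigroup. -/
def CondA1 (P : ℝ → X → Measure X) : Prop :=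
  ∀ f : X → ℝ, Continuous f → (∃ C, ∀ x, |f x| ≤ C) →
    ∀ x : X, Tendsto (fun t => funAct P t f x) (𝓝[>] (0 : ℝ)) (𝓝 (f x))

/-- Condition (A2): the Feller property. -/
def CondA2 (P : ℝ → X → Measure X) : Prop :=
  ∀ f : X → ℝ, Continuous f → (∃ C, ∀ x, |f x| ≤ C) → ∀ t, 0 ≤ t →
    Continuous (funAct P t f) ∧ ∃ C, ∀ x, |funAct P t f x| ≤ C

/-- Condition (A3): preservation of finite first moments and exponential
contractivity in the Wasserstein distance, with rate `γ`. -/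
def CondA3 (P : ℝ → X → Measure X) (γ : ℝ) : Prop :=
  (∀ ν : Measure X, IsProbabilityMeasure ν → FiniteFirstMoment ν →
    ∀ t, 0 < t → FiniteFirstMoment (measAct P t ν)) ∧
  0 < γ ∧
  ∀ t, 0 ≤ t → ∀ x y : X,
    wassDist (P t x) (P t y) ≤ Real.exp (-γ * t) * dist x y

/-- Condition (A4): a uniform-in-time moment bound of order `ζ > 2` for the initial
distribution `μ`, along the semigroup. -/
def CondA4 (P : ℝ → X → Measure X) (μ : Measure X) (x₀ : X) (ζ : ℝ) : Prop :=
  2 < ζ ∧ ∃ M : ℝ, ∀ t, 0 ≤ t →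
    (∫⁻ x, ENNReal.ofReal (dist x₀ x ^ ζ) ∂(measAct P t μ)) ≤ ENNReal.ofReal M

variable {Ω : Type*} [MeasurableSpace Ω]

/-- The natural filtration of the process `Φ`. -/
def natFiltration (Φ : ℝ → Ω → X) (s : ℝ) : MeasurableSpace Ω :=
  ⨆ u ∈ Set.Icc (0 : ℝ) s, MeasurableSpace.comap (Φ u) inferInstance

/-- A (progressively measurable) time-homogeneous Markov process with state space `X`,
transition semigroup `P` and initial distribution `μ`, realized on `(Ω, ℙ)`. -/
structure IsMarkovProcess (P : ℝ → X → Measure X) (Φ : ℝ → Ω → X)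
    (ℙ : Measure Ω) (μ : Measure X) : Prop where
  jointMeas : Measurable fun p : ℝ × Ω => Φ p.1 p.2
  init : ℙ.map (Φ 0) = μ
  law : ∀ t, 0 ≤ t → ℙ.map (Φ t) = measAct P t μ
  markov : ∀ f : X → ℝ, Measurable f → (∃ C, ∀ x, |f x| ≤ C) →
    ∀ s t : ℝ, 0 ≤ s → 0 ≤ t →
      (fun ω => funAct P t f (Φ s ω)) =ᵐ[ℙ]
        ℙ[(fun ω => f (Φ (s + t) ω)) | natFiltration Φ s]

/-- A Markov process together with a measurable family of laws `{ℙ_x}_{x ∈ X}`,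
with `ℙ_x(Φ_0 = x) = 1`. -/
structure IsMarkovFamily (P : ℝ → X → Measure X) (Φ : ℝ → Ω → X)
    (ℙ : X → Measure Ω) : Prop where
  prob : ∀ x, IsProbabilityMeasure (ℙ x)
  jointMeas : Measurable fun p : ℝ × Ω => Φ p.1 p.2
  measFam : ∀ s : Set Ω, MeasurableSet s → Measurable fun x => ℙ x s
  start : ∀ x, (ℙ x) {ω | Φ 0 ω = x} = 1
  law : ∀ x, ∀ t, 0 ≤ t → (ℙ x).map (Φ t) = P t x
  markov : ∀ x : X, ∀ f : X → ℝ, Measurable f → (∃ C, ∀ z, |f z| ≤ C) →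
    ∀ s t : ℝ, 0 ≤ s → 0 ≤ t →
      (fun ω => funAct P t f (Φ s ω)) =ᵐ[ℙ x]
        (ℙ x)[(fun ω => f (Φ (s + t) ω)) | natFiltration Φ s]

/-- The corrector function `χ_g(x) = ∫_0^∞ (P_t g)(x) dt`. -/
def corrector (P : ℝ → X → Measure X) (g : X → ℝ) (x : X) : ℝ :=
  ∫ t in Set.Ioi (0 : ℝ), funAct P t g x

/-- The additive functional `I_t(g) = ∫_0^t g(Φ_s) ds`. -/
def addFun (g : X → ℝ) (Φ : ℝ → Ω → X) (t : ℝ) (ω : Ω) : ℝ :=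
  ∫ s in (0 : ℝ)..t, g (Φ s ω)

/-- The martingale part `M_t(g) = χ_g(Φ_t) - χ_g(Φ_0) + I_t(g)`. -/
def mart (P : ℝ → X → Measure X) (g : X → ℝ) (Φ : ℝ → Ω → X) (t : ℝ) (ω : Ω) : ℝ :=
  corrector P g (Φ t ω) - corrector P g (Φ 0 ω) + addFun g Φ t ω

/-- The martingale increments `Z_n(g) = M_n(g) - M_{n-1}(g)`. -/
def incr (P : ℝ → X → Measure X) (g : X → ℝ) (Φ : ℝ → Ω → X) (n : ℕ) (ω : Ω) : ℝ :=
  mart P g Φ (n : ℝ) ω - mart P g Φ ((n : ℝ) - 1) ω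

/-- Truncation `a ∧ p` for `p ∈ ℕ ∪ {∞}`, with the convention `a ∧ ∞ = a`. -/
def truncMin (a : ℝ) (p : ℕ∞) : ℝ :=
  if p = ⊤ then a else min a (p.toNat : ℝ)

/-!
Wasserstein contraction makes `P_t g` a `K e^{-γt}`-Lipschitz function with `μ_*`-mean zero, so
`|P_t g x| ≤ K e^{-γt} (d(x₀, x) + m)` with `m = ∫ d(x₀, ·) dμ_*`, and the corrector grows at most
linearly: `|χ_g x| ≤ K (d(x₀, x) + m) / γ`. The moment `m` is finite by a drift argument, since
contraction also gives `P_1 d(x₀, ·) ≤ e^{-γ} d(x₀, ·) + c`. The uniform moment of order `ζ > 2`,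
Markov's inequality and Borel–Cantelli give `d(x₀, Φ_n) ≤ √n` eventually, almost surely. Hence the
numerator of `R_n` is `O(√n)`, while the denominator is `√(2 n ln ln n)`.
-/

section Bind

variable {α β : Type*} [MeasurableSpace α] [MeasurableSpace β]
  {ν : Measure α} {κ : α → Measure β} {f : β → ℝ}

open ProbabilityTheory in
theorem MeasureTheory.Measure.bind_eq_comp_const (hκ : Measurable κ) :
    ν.bind κ = (Kernel.mk κ hκ ∘ₖ Kernel.const Unit ν) () :=
  Measure.comp_eq_comp_const_apply (κ := Kernel.mk κ hκ) (μ := ν)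

theorem MeasureTheory.Integrable.integral_bind (hκ : Measurable κ)
    (hf : Integrable f (ν.bind κ)) : Integrable (fun x => ∫ y, f y ∂(κ x)) ν := by
  rw [Measure.bind_eq_comp_const hκ] at hf
  simpa using hf.integral_comp

theorem MeasureTheory.Measure.integral_bind (hκ : Measurable κ) (hf : Integrable f (ν.bind κ)) :
    ∫ y, f y ∂(ν.bind κ) = ∫ x, ∫ y, f y ∂(κ x) ∂ν := by
  rw [Measure.bind_eq_comp_const hκ] at hf ⊢
  simpa using ProbabilityTheory.Kernel.integral_comp hf

end Bind

section Drift

variable {α : Type*} [MeasurableSpace α] {ν : Measure α}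
  {κ : α → Measure α} {V : α → ℝ}

theorem integrableOn_setOf_le [IsFiniteMeasure ν] (hV : Measurable V) (hV0 : ∀ x, 0 ≤ V x)
    (R : ℝ) : IntegrableOn V {x | V x ≤ R} ν :=
  Integrable.of_bound hV.aestronglyMeasurable R <|
    (ae_restrict_iff' (measurableSet_le hV measurable_const)).2 <| ae_of_all _
      fun x (hx : V x ≤ R) => by rwa [Real.norm_eq_abs, abs_of_nonneg (hV0 x)]

theorem setIntegral_le_of_drift [IsProbabilityMeasure ν] (hκ : Measurable κ)
    (hκp : ∀ x, IsProbabilityMeasure (κ x))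
    (hinv : ν.bind κ = ν) (hV : Measurable V) (hV0 : ∀ x, 0 ≤ V x)
    (hVκ : ∀ x, Integrable V (κ x)) {θ c : ℝ} (hθ : θ < 1) (hc : 0 ≤ c)
    (hdrift : ∀ x, ∫ y, V y ∂(κ x) ≤ θ * V x + c) {R : ℝ} (hR : 0 ≤ R) :
    ∫ x in {x | V x ≤ R}, V x ∂ν ≤ c / (1 - θ) := by
  set s := {x | V x ≤ R}
  have hs : MeasurableSet s := measurableSet_le hV measurable_const
  -- `ν` is tested against the bounded truncation `h = min V R`, since `∫ V ∂ν` might be infinite.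
  set h : α → ℝ := fun y => min (V y) R
  have hh_bdd : ∀ y, ‖h y‖ ≤ R := fun y => by
    rw [Real.norm_eq_abs, abs_of_nonneg (le_min (hV0 y) hR)]
    exact min_le_right _ _
  have hh_int : ∀ μ : Measure α, IsFiniteMeasure μ → Integrable h μ := fun μ _ =>
    .of_bound (hV.min measurable_const).aestronglyMeasurable R (ae_of_all _ hh_bdd)
  have hh_bind : Integrable h (ν.bind κ) := by
    rw [hinv]
    exact hh_int ν inferInstance
  have hQh_int := hh_bind.integral_bind hκ
  have hQh := Measure.integral_bind hκ hh_bind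
  rw [hinv] at hQh
  have hVs := integrableOn_setOf_le (ν := ν) hV hV0 R
  have hpoint : ∀ x, ∫ y, h y ∂(κ x) - h x ≤ c - (1 - θ) * s.indicator V x := by
    intro x
    have hhκ := hh_int (κ x) inferInstance
    have hQV : ∫ y, h y ∂(κ x) ≤ ∫ y, V y ∂(κ x) :=
      integral_mono hhκ (hVκ x) fun y => min_le_left _ _
    have hQR : ∫ y, h y ∂(κ x) ≤ R := by
      simpa using integral_mono hhκ (integrable_const R) fun y => min_le_right (V y) R
    by_cases hx : V x ≤ R
    · simp only [h, s, Set.indicator_of_mem (show x ∈ {x | V x ≤ R} from hx), min_eq_left hx]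
      linarith [hdrift x]
    · simp only [h, s, Set.indicator_of_notMem (show x ∉ {x | V x ≤ R} from hx),
        min_eq_right (le_of_not_ge hx)]
      linarith
  have hmono : ∫ x, (∫ y, h y ∂(κ x) - h x) ∂ν ≤ ∫ x, (c - (1 - θ) * s.indicator V x) ∂ν :=
    integral_mono (hQh_int.sub (hh_int ν inferInstance))
      ((integrable_const c).sub ((hVs.integrable_indicator hs).const_mul (1 - θ))) hpoint
  rw [integral_sub hQh_int (hh_int ν inferInstance), ← hQh, sub_self,
    integral_sub (integrable_const c) ((hVs.integrable_indicator hs).const_mul _),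
    integral_const_mul, integral_indicator hs] at hmono
  rw [le_div_iff₀ (sub_pos.2 hθ)]
  simp only [integral_const, probReal_univ, smul_eq_mul, one_mul] at hmono
  linarith

theorem integrable_of_drift [IsProbabilityMeasure ν] (hκ : Measurable κ)
    (hκp : ∀ x, IsProbabilityMeasure (κ x))
    (hinv : ν.bind κ = ν) (hV : Measurable V) (hV0 : ∀ x, 0 ≤ V x)
    (hVκ : ∀ x, Integrable V (κ x)) {θ c : ℝ} (hθ : θ < 1) (hc : 0 ≤ c)
    (hdrift : ∀ x, ∫ y, V y ∂(κ x) ≤ θ * V x + c) : Integrable V ν := by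
  set s : ℕ → Set α := fun n => {x | V x ≤ n}
  have hcover : (⋃ n, s n) = univ :=
    eq_univ_of_forall fun x => mem_iUnion.2 ⟨⌈V x⌉₊, Nat.le_ceil (V x)⟩
  have hdir : Directed (· ⊆ ·) s := Monotone.directed_le fun m n hmn x (hx : V x ≤ m) =>
    (show V x ≤ n from hx.trans (Nat.cast_le.2 hmn))
  refine ⟨hV.aestronglyMeasurable, (hasFiniteIntegral_iff_ofReal (ae_of_all _ hV0)).2 ?_⟩
  calc ∫⁻ x, ENNReal.ofReal (V x) ∂ν = ⨆ n, ∫⁻ x in s n, ENNReal.ofReal (V x) ∂ν := by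
        rw [← setLIntegral_iUnion_of_directed _ hdir, hcover, Measure.restrict_univ]
    _ ≤ ENNReal.ofReal (c / (1 - θ)) := iSup_le fun n => by
        rw [← ofReal_integral_eq_lintegral_ofReal (integrableOn_setOf_le hV hV0 n)
          (ae_of_all _ fun x => hV0 x)]
        exact ENNReal.ofReal_le_ofReal
          (setIntegral_le_of_drift hκ hκp hinv hV hV0 hVκ hθ hc hdrift n.cast_nonneg)
    _ < ⊤ := ENNReal.ofReal_lt_top

end Drift

section FirstMoment

variable {S : Type*} [MetricSpace S] [MeasurableSpace S] [OpensMeasurableSpace S]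
  {ν ν' : Measure S} {f : S → ℝ} {K : ℝ≥0}

theorem LipschitzWith.integrable_of_finiteFirstMoment [IsFiniteMeasure ν]
    (hν : FiniteFirstMoment ν) (hf : LipschitzWith K f) : Integrable f ν := by
  rcases isEmpty_or_nonempty S with hX | ⟨⟨x₀⟩⟩
  · exact .of_isEmpty
  refine Integrable.mono' (((hν x₀).const_mul K).add (integrable_const |f x₀|))
    hf.continuous.aestronglyMeasurable (ae_of_all _ fun y => ?_)
  have hy := hf.dist_le_mul y x₀
  rw [Real.dist_eq, dist_comm] at hy
  rw [Real.norm_eq_abs, Pi.add_apply]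
  linarith [abs_sub_abs_le_abs_sub (f y) (f x₀)]

theorem abs_integral_sub_le_mul_integral_dist [IsProbabilityMeasure ν]
    (hν : FiniteFirstMoment ν) (hf : LipschitzWith K f) (x : S) :
    |∫ y, f y ∂ν - f x| ≤ K * ∫ y, dist x y ∂ν := by
  have hfx : ∫ y, f y ∂ν - f x = ∫ y, (f y - f x) ∂ν := by
    rw [integral_sub (hf.integrable_of_finiteFirstMoment hν) (integrable_const _),
      integral_const, probReal_univ, one_smul]
  rw [hfx, ← integral_const_mul, ← Real.norm_eq_abs]
  refine norm_integral_le_of_norm_le ((hν x).const_mul K) (ae_of_all _ fun y => ?_)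
  rw [← dist_eq_norm, dist_comm x y]
  exact hf.dist_le_mul y x

theorem abs_integral_sub_le_wassDist [IsProbabilityMeasure ν] [IsProbabilityMeasure ν']
    (hν : FiniteFirstMoment ν) (hν' : FiniteFirstMoment ν') (hf : LipschitzWith 1 f) :
    |∫ x, f x ∂ν - ∫ x, f x ∂ν'| ≤ wassDist ν ν' := by
  obtain ⟨x₀⟩ := nonempty_of_isProbabilityMeasure ν
  have hbound : ∀ h : S → ℝ, LipschitzWith 1 h →
      |∫ x, h x ∂ν - ∫ x, h x ∂ν'| ≤ (∫ y, dist x₀ y ∂ν) + ∫ y, dist x₀ y ∂ν' := by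
    intro h hh
    have h₁ := abs_integral_sub_le_mul_integral_dist hν hh x₀
    have h₂ := abs_integral_sub_le_mul_integral_dist hν' hh x₀
    rw [NNReal.coe_one, one_mul] at h₁ h₂
    calc |∫ x, h x ∂ν - ∫ x, h x ∂ν'|
        = |(∫ x, h x ∂ν - h x₀) - (∫ x, h x ∂ν' - h x₀)| := by ring_nf
      _ ≤ _ := (abs_sub _ _).trans (add_le_add h₁ h₂)
  exact le_csSup ⟨_, by rintro r ⟨h, hh, rfl⟩; exact hbound h hh⟩ ⟨f, hf, rfl⟩

theorem abs_integral_sub_le_mul_wassDist [IsProbabilityMeasure ν] [IsProbabilityMeasure ν']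
    (hν : FiniteFirstMoment ν) (hν' : FiniteFirstMoment ν') (hf : LipschitzWith K f) :
    |∫ x, f x ∂ν - ∫ x, f x ∂ν'| ≤ K * wassDist ν ν' := by
  rcases eq_or_ne K 0 with rfl | hK
  · obtain ⟨x₀⟩ := nonempty_of_isProbabilityMeasure ν
    have h₁ := abs_integral_sub_le_mul_integral_dist hν hf x₀
    have h₂ := abs_integral_sub_le_mul_integral_dist hν' hf x₀
    simp only [NNReal.coe_zero, zero_mul, abs_nonpos_iff, sub_eq_zero] at h₁ h₂
    simp [h₁, h₂]
  have hK : (0 : ℝ) < K := NNReal.coe_pos.2 (pos_iff_ne_zero.2 hK)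
  have hf₁ : LipschitzWith 1 fun x => f x / K := LipschitzWith.of_dist_le_mul fun a b => by
    rw [Real.dist_eq, ← sub_div, abs_div, abs_of_pos hK, NNReal.coe_one, one_mul,
      div_le_iff₀ hK, mul_comm, ← Real.dist_eq]
    exact hf.dist_le_mul a b
  have := abs_integral_sub_le_wassDist hν hν' hf₁
  rwa [integral_div, integral_div, ← sub_div, abs_div, abs_of_pos hK, div_le_iff₀' hK] at this

end FirstMoment

section Semigroup

variable {S : Type*} [MeasurableSpace S] {P : ℝ → S → Measure S}

theorem IsMarkovSemigroup.measurable (hP : IsMarkovSemigroup P) (t : ℝ) : Measurable (P t) :=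
  Measure.measurable_of_measurable_coe _ fun A hA =>
    (hP.jointMeas A hA).comp (measurable_const.prodMk measurable_id)

variable [MetricSpace S] [OpensMeasurableSpace S] {γ : ℝ} {f : S → ℝ} {K : ℝ≥0} {ν : Measure S}

theorem finiteFirstMoment_dirac (x : S) : FiniteFirstMoment (Measure.dirac x) :=
  fun _ => integrable_dirac enorm_lt_top

theorem IsMarkovSemigroup.finiteFirstMoment (hP : IsMarkovSemigroup P) (hA3 : CondA3 P γ)
    {t : ℝ} (ht : 0 ≤ t) (x : S) : FiniteFirstMoment (P t x) := by
  rcases ht.eq_or_lt with rfl | ht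
  · rw [hP.init]
    exact finiteFirstMoment_dirac x
  · simpa [measAct, Measure.dirac_bind (hP.measurable t)] using
      hA3.1 _ inferInstance (finiteFirstMoment_dirac x) t ht

theorem IsMarkovSemigroup.lipschitzWith_funAct (hP : IsMarkovSemigroup P) (hA3 : CondA3 P γ)
    (hf : LipschitzWith K f) {t : ℝ} (ht : 0 ≤ t) :
    LipschitzWith (K * (Real.exp (-γ * t)).toNNReal) (funAct P t f) :=
  LipschitzWith.of_dist_le_mul fun x y => by
    have := hP.prob t ht x
    have := hP.prob t ht y
    rw [Real.dist_eq, NNReal.coe_mul, Real.coe_toNNReal _ (Real.exp_pos _).le, mul_assoc]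
    exact (abs_integral_sub_le_mul_wassDist (hP.finiteFirstMoment hA3 ht x)
      (hP.finiteFirstMoment hA3 ht y) hf).trans
        (mul_le_mul_of_nonneg_left (hA3.2.2 t ht x y) K.2)

theorem IsMarkovSemigroup.integral_funAct (hP : IsMarkovSemigroup P) [IsFiniteMeasure ν]
    (hν : FiniteFirstMoment ν) {t : ℝ} (hinv : measAct P t ν = ν) (hf : LipschitzWith K f) :
    ∫ x, funAct P t f x ∂ν = ∫ x, f x ∂ν := by
  have hf' : Integrable f (ν.bind (P t)) := by
    rw [← measAct, hinv]
    exact hf.integrable_of_finiteFirstMoment hν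
  simp only [funAct]
  rw [← Measure.integral_bind (hP.measurable t) hf', ← measAct, hinv]

theorem IsMarkovSemigroup.finiteFirstMoment_of_invariant (hP : IsMarkovSemigroup P)
    (hA3 : CondA3 P γ) [IsProbabilityMeasure ν] (hinv : measAct P 1 ν = ν) :
    FiniteFirstMoment ν := by
  intro x₀
  have hP₁ := hP.finiteFirstMoment hA3 zero_le_one
  have hP₁prob := hP.prob 1 zero_le_one
  refine integrable_of_drift (θ := Real.exp (-γ)) (c := ∫ y, dist x₀ y ∂(P 1 x₀))
    (hP.measurable 1) hP₁prob hinv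
    (continuous_const.dist continuous_id).measurable (fun _ => dist_nonneg) (fun x => hP₁ x x₀)
    (Real.exp_lt_one_iff.2 (neg_lt_zero.2 hA3.2.1)) (integral_nonneg fun _ => dist_nonneg)
    fun x => ?_
  have hW := abs_integral_sub_le_mul_wassDist (hP₁ x) (hP₁ x₀) (LipschitzWith.dist_right x₀)
  have hC := hA3.2.2 1 zero_le_one x x₀
  rw [NNReal.coe_one, one_mul] at hW
  rw [mul_one, dist_comm x x₀] at hC
  linarith [le_abs_self (∫ y, dist x₀ y ∂(P 1 x) - ∫ y, dist x₀ y ∂(P 1 x₀))]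

end Semigroup

section Corrector

variable {S : Type*} [MetricSpace S] [MeasurableSpace S] [OpensMeasurableSpace S]
  {P : ℝ → S → Measure S} {γ : ℝ} {f : S → ℝ} {K : ℝ≥0} {ν : Measure S} [IsProbabilityMeasure ν]

theorem IsMarkovSemigroup.abs_funAct_le (hP : IsMarkovSemigroup P) (hA3 : CondA3 P γ)
    (hinv : ∀ t, 0 ≤ t → measAct P t ν = ν) (hf : LipschitzWith K f) (hmean : ∫ x, f x ∂ν = 0)
    (x₀ x : S) {t : ℝ} (ht : 0 ≤ t) :
    |funAct P t f x| ≤ K * Real.exp (-γ * t) * (dist x₀ x + ∫ y, dist x₀ y ∂ν) := by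
  have hν := hP.finiteFirstMoment_of_invariant hA3 (hinv 1 zero_le_one)
  have h := abs_integral_sub_le_mul_integral_dist hν (hP.lipschitzWith_funAct hA3 hf ht) x
  rw [hP.integral_funAct hν (hinv t ht) hf, hmean, zero_sub, abs_neg, NNReal.coe_mul,
    Real.coe_toNNReal _ (Real.exp_pos _).le] at h
  refine h.trans (mul_le_mul_of_nonneg_left ?_ (by positivity))
  calc ∫ y, dist x y ∂ν ≤ ∫ y, (dist x₀ x + dist x₀ y) ∂ν :=
        integral_mono (hν x) ((integrable_const _).add (hν x₀)) fun y => dist_triangle_left x y x₀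
    _ = dist x₀ x + ∫ y, dist x₀ y ∂ν := by
        rw [integral_add (integrable_const _) (hν x₀), integral_const, probReal_univ, one_smul]

theorem IsMarkovSemigroup.abs_corrector_le (hP : IsMarkovSemigroup P) (hA3 : CondA3 P γ)
    (hinv : ∀ t, 0 ≤ t → measAct P t ν = ν) (hf : LipschitzWith K f) (hmean : ∫ x, f x ∂ν = 0)
    (x₀ x : S) : |corrector P f x| ≤ K * (dist x₀ x + ∫ y, dist x₀ y ∂ν) / γ := by
  have hγ := hA3.2.1
  set B := K * (dist x₀ x + ∫ y, dist x₀ y ∂ν)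
  calc |corrector P f x| ≤ ∫ t in Ioi 0, B * Real.exp (-γ * t) := by
        rw [corrector, ← Real.norm_eq_abs]
        exact norm_integral_le_of_norm_le ((exp_neg_integrableOn_Ioi 0 hγ).const_mul B)
          ((ae_restrict_iff' measurableSet_Ioi).2 <| ae_of_all _ fun t (ht : 0 < t) =>
            (hP.abs_funAct_le hA3 hinv hf hmean x₀ x ht.le).trans_eq (mul_right_comm _ _ _))
    _ = B / γ := by
        rw [integral_const_mul, integral_exp_mul_Ioi (neg_lt_zero.2 hγ), mul_zero, Real.exp_zero]
        field_simp

end Corrector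

theorem ae_eventually_le_sqrt_of_lintegral_rpow_le {ℙ : Measure Ω} {Y : ℕ → Ω → ℝ}
    (hY : ∀ n, Measurable (Y n)) {ζ : ℝ} (hζ : 2 < ζ) {M : ℝ≥0∞} (hM : M ≠ ∞)
    (hmom : ∀ n, ∫⁻ ω, ENNReal.ofReal (Y n ω ^ ζ) ∂ℙ ≤ M) :
    ∀ᵐ ω ∂ℙ, ∀ᶠ n : ℕ in atTop, Y n ω ≤ √n := by
  -- Shifted to `n + 1`: at `n = 0` the Markov bound would involve `0 ^ (-(ζ / 2)) = 0`.
  set s : ℕ → Set Ω := fun n => {ω | √((n : ℝ) + 1) < Y (n + 1) ω}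
  have hs : ∀ n : ℕ, ℙ (s n) ≤ M * ENNReal.ofReal (((n : ℝ) + 1) ^ (-(ζ / 2))) := by
    intro n
    have hpos : 0 < ((n : ℝ) + 1) ^ (ζ / 2) := by positivity
    calc ℙ (s n) ≤ ℙ {ω | ENNReal.ofReal (((n : ℝ) + 1) ^ (ζ / 2)) ≤
          ENNReal.ofReal (Y (n + 1) ω ^ ζ)} := by
          refine measure_mono fun ω (hω : √((n : ℝ) + 1) < Y (n + 1) ω) => ?_
          refine ENNReal.ofReal_le_ofReal ?_
          calc ((n : ℝ) + 1) ^ (ζ / 2) = √((n : ℝ) + 1) ^ ζ := by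
                rw [Real.sqrt_eq_rpow, ← Real.rpow_mul (by positivity)]
                ring_nf
            _ ≤ Y (n + 1) ω ^ ζ := Real.rpow_le_rpow (Real.sqrt_nonneg _) hω.le (by linarith)
      _ ≤ (∫⁻ ω, ENNReal.ofReal (Y (n + 1) ω ^ ζ) ∂ℙ) /
          ENNReal.ofReal (((n : ℝ) + 1) ^ (ζ / 2)) :=
          meas_ge_le_lintegral_div (by fun_prop) (by simpa using hpos) ENNReal.ofReal_ne_top
      _ ≤ M * ENNReal.ofReal (((n : ℝ) + 1) ^ (-(ζ / 2))) := by
          rw [div_eq_mul_inv, ← ENNReal.ofReal_inv_of_pos hpos, ← Real.rpow_neg (by positivity)]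
          exact mul_le_mul_left (hmom _) _
  have hsummable : Summable fun n : ℕ => ((n : ℝ) + 1) ^ (-(ζ / 2)) := by
    have := (summable_nat_add_iff 1).2 (Real.summable_nat_rpow.2 (by linarith : -(ζ / 2) < -1))
    simpa using this
  have hsum : ∑' n, ℙ (s n) ≠ ∞ := by
    refine ne_top_of_le_ne_top ?_ ((ENNReal.tsum_le_tsum hs).trans_eq ENNReal.tsum_mul_left)
    rw [← ENNReal.ofReal_tsum_of_nonneg (fun n => by positivity) hsummable]
    exact ENNReal.mul_ne_top hM ENNReal.ofReal_ne_top
  filter_upwards [ae_eventually_notMem hsum] with ω hω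
  rw [← map_add_atTop_eq_nat 1, eventually_map]
  filter_upwards [hω] with n hn
  simpa [s] using hn

theorem IsMarkovProcess.ae_eventually_dist_le_sqrt {S : Type*} [MetricSpace S] [MeasurableSpace S]
    [OpensMeasurableSpace S] {P : ℝ → S → Measure S} {Φ : ℝ → Ω → S} {ℙ : Measure Ω}
    {μ : Measure S} {x₀ : S} {ζ : ℝ} (hΦ : IsMarkovProcess P Φ ℙ μ) (hA4 : CondA4 P μ x₀ ζ) :
    ∀ᵐ ω ∂ℙ, ∀ᶠ n : ℕ in atTop, dist x₀ (Φ n ω) ≤ √n := by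
  obtain ⟨hζ, M, hM⟩ := hA4
  have hdist : Measurable (dist x₀) := (continuous_const.dist continuous_id).measurable
  have hΦ_meas : ∀ t, Measurable (Φ t) := fun t =>
    hΦ.jointMeas.comp (measurable_const.prodMk measurable_id)
  refine ae_eventually_le_sqrt_of_lintegral_rpow_le (fun n => hdist.comp (hΦ_meas n)) hζ
    (ENNReal.ofReal_ne_top (r := M)) fun n => ?_
  rw [← lintegral_map (f := fun x => ENNReal.ofReal (dist x₀ x ^ ζ)) (by fun_prop) (hΦ_meas n),
    hΦ.law n n.cast_nonneg]
  exact hM n n.cast_nonneg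

theorem tendsto_div_sqrt_two_mul_log_log {a : ℕ → ℝ} {C : ℝ}
    (ha : ∀ᶠ n : ℕ in atTop, |a n| ≤ C * √n) :
    Tendsto (fun n : ℕ => a n / √(2 * n * Real.log (Real.log n))) atTop (𝓝 0) := by
  have hLL : Tendsto (fun n : ℕ => Real.log (Real.log n)) atTop atTop :=
    Real.tendsto_log_atTop.comp (Real.tendsto_log_atTop.comp tendsto_natCast_atTop_atTop)
  refine squeeze_zero_norm' ?_ ((tendsto_const_nhds (x := C)).div_atTop
    (Real.tendsto_sqrt_atTop.comp (hLL.const_mul_atTop two_pos)))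
  filter_upwards [ha, hLL.eventually_gt_atTop 0, eventually_gt_atTop 0] with n han hL hn
  have hn' : (0 : ℝ) < √n := Real.sqrt_pos.2 (Nat.cast_pos.2 hn)
  have hL' : 0 < √(2 * Real.log (Real.log n)) := Real.sqrt_pos.2 (by positivity)
  rw [Real.norm_eq_abs, abs_div, abs_of_nonneg (Real.sqrt_nonneg _), mul_right_comm,
    Real.sqrt_mul (by positivity), Function.comp_apply, div_le_div_iff₀ (by positivity) hL']
  calc |a n| * √(2 * Real.log (Real.log n)) ≤ C * √n * √(2 * Real.log (Real.log n)) :=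
        mul_le_mul_of_nonneg_right han hL'.le
    _ = C * (√(2 * Real.log (Real.log n)) * √n) := by ring

theorem remainder_tendsto_zero_general
    (P : ℝ → X → Measure X) (hP : IsMarkovSemigroup P)
    (γ ζ : ℝ) (x₀ : X) (μ μstar : Measure X)
    [IsProbabilityMeasure μstar]
    (hA3 : CondA3 P γ) (hA4 : CondA4 P μ x₀ ζ)
    (hinv : ∀ t, 0 ≤ t → measAct P t μstar = μstar)
    (g : X → ℝ) (K : ℝ≥0) (hLip : LipschitzWith K g)
    (hmean : ∫ x, g x ∂μstar = 0)
    (ℙμ : Measure Ω)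
    (Φ : ℝ → Ω → X) (hΦ : IsMarkovProcess P Φ ℙμ μ) :
    ∀ᵐ ω ∂ℙμ,
      Tendsto (fun n : ℕ =>
          (corrector P g (Φ 0 ω) - corrector P g (Φ (n : ℝ) ω)) /
            Real.sqrt (2 * (n : ℝ) * Real.log (Real.log (n : ℝ))))
        atTop (𝓝 0) := by
  set m := ∫ y, dist x₀ y ∂μstar
  have hm : 0 ≤ m := integral_nonneg fun _ => dist_nonneg
  have hγ : 0 < γ := hA3.2.1
  filter_upwards [hΦ.ae_eventually_dist_le_sqrt hA4] with ω hω
  set χ₀ := corrector P g (Φ 0 ω)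
  refine tendsto_div_sqrt_two_mul_log_log (C := |χ₀| + K * (1 + m) / γ) ?_
  filter_upwards [hω, eventually_ge_atTop 1] with n hdist hn
  have hsqrt : 1 ≤ √(n : ℝ) := Real.one_le_sqrt.2 (Nat.one_le_cast.2 hn)
  have hχn : |corrector P g (Φ n ω)| ≤ K * (1 + m) / γ * √n := calc
    _ ≤ K * (dist x₀ (Φ n ω) + m) / γ := hP.abs_corrector_le hA3 hinv hLip hmean x₀ _
    _ ≤ K * (√n + m) / γ := by gcongr
    _ ≤ K * (1 + m) / γ * √n := by
        rw [div_mul_eq_mul_div, mul_assoc]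
        gcongr
        nlinarith
  calc |χ₀ - corrector P g (Φ n ω)| ≤ |χ₀| + K * (1 + m) / γ * √n :=
        (abs_sub _ _).trans (add_le_add_right hχn _)
    _ ≤ (|χ₀| + K * (1 + m) / γ) * √n := by nlinarith [abs_nonneg χ₀]

/-- Lemma 2. Under (A2)–(A4), the sequence
`R_n(g) = (χ_g(Φ_0) - χ_g(Φ_n))/√(2 n ln ln n)` converges to `0` `ℙ_μ`-a.s. -/
theorem remainder_tendsto_zero
    (P : ℝ → X → Measure X) (hP : IsMarkovSemigroup P)
    (γ ζ : ℝ) (x₀ : X) (μ μstar : Measure X)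
    [IsProbabilityMeasure μ] [IsProbabilityMeasure μstar]
    (hA2 : CondA2 P) (hA3 : CondA3 P γ) (hA4 : CondA4 P μ x₀ ζ)
    (hinv : ∀ t, 0 ≤ t → measAct P t μstar = μstar)
    (g : X → ℝ) (K : ℝ≥0) (hLip : LipschitzWith K g) (hBd : ∃ C, ∀ x, |g x| ≤ C)
    (hmean : ∫ x, g x ∂μstar = 0)
    (ℙμ : Measure Ω) [IsProbabilityMeasure ℙμ]
    (Φ : ℝ → Ω → X) (hΦ : IsMarkovProcess P Φ ℙμ μ) :
    ∀ᵐ ω ∂ℙμ,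
      Tendsto (fun n : ℕ =>
          (corrector P g (Φ 0 ω) - corrector P g (Φ (n : ℝ) ω)) /
            Real.sqrt (2 * (n : ℝ) * Real.log (Real.log (n : ℝ))))
        atTop (𝓝 0) :=
  remainder_tendsto_zero_general P hP γ ζ x₀ μ μstar hA3 hA4 hinv g K hLip hmean ℙμ Φ hΦ
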